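/- Let P = N(μ, τ_P²) and Q = N(μ, τ_Q²) with τ_P² ≠ τ_Q², and let (X_i)_{i≥1} be i.i.d. with distribution P. Then the cumulative Hyvärinen score difference Σ_{i=1}^n [S_H(X_i, Q) − S_H(X_i, P)] tends to +∞ almost surely as n → ∞; i.e., model selection by minimum cumulative Hyvärinen score consistently favours the true model P. -/

import Mathlib

open MeasureTheory ProbabilityTheory NNReal Filter

noncomputable def hyvScore (q : ℝ → ℝ) (x : ℝ) : ℝ :=
  2 * deriv (deriv (fun y => Real.log (q y))) x
    + (deriv (fun y => Real.log (q y)) x) ^ 2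

/-!
The Hyvärinen score of the Gaussian density `N(μ, w)` is the quadratic `-2/w + (x - μ)²/w²`,
so under `N(μ, v)` the score differences `S_H(X_i, N(μ, w)) - S_H(X_i, N(μ, v))` are i.i.d.,
integrable, with mean `(v - w)² / (v w²) > 0`. By the strong law of large numbers their partial
sums grow linearly, hence tend to `+∞` almost surely.
-/

open Real

lemma log_gaussianPDFReal (μ : ℝ) {v : ℝ≥0} (hv : 0 < v) (y : ℝ) :
    log (gaussianPDFReal μ v y) = -(y - μ) ^ 2 / (2 * v) - log √(2 * π * v) := by
  rw [gaussianPDFReal, log_mul (by positivity) (exp_ne_zero _), log_inv, log_exp]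
  ring

lemma deriv_log_gaussianPDFReal (μ : ℝ) {v : ℝ≥0} (hv : 0 < v) :
    deriv (fun y => log (gaussianPDFReal μ v y)) = fun y => (μ - y) / v := by
  simp_rw [log_gaussianPDFReal μ hv]
  ext y
  have hv' : (v : ℝ) ≠ 0 := by positivity
  have : HasDerivAt (fun y => -(y - μ) ^ 2 / (2 * v) - log √(2 * π * v)) ((μ - y) / v) y := by
    refine ((((hasDerivAt_id' y).sub_const μ).fun_pow 2).fun_neg.div_const
      (2 * (v : ℝ))).sub_const (log √(2 * π * v)) |>.congr_deriv ?_
    field_simp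
    ring
  exact this.deriv

lemma hyvScore_gaussianPDFReal (μ : ℝ) {v : ℝ≥0} (hv : 0 < v) (x : ℝ) :
    hyvScore (gaussianPDFReal μ v) x = -2 / v + (x - μ) ^ 2 / v ^ 2 := by
  have hv' : (v : ℝ) ≠ 0 := by positivity
  have hderiv : deriv (fun y => (μ - y) / (v : ℝ)) x = -1 / v :=
    (((hasDerivAt_id x).const_sub μ).div_const (v : ℝ)).deriv
  rw [hyvScore, deriv_log_gaussianPDFReal μ hv, hderiv]
  field_simp
  ring

lemma integrable_sq_sub_gaussianReal (μ : ℝ) (v : ℝ≥0) :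
    Integrable (fun x => (x - μ) ^ 2) (gaussianReal μ v) :=
  ((memLp_id_gaussianReal 2).sub (memLp_const μ)).integrable_sq

lemma integral_sq_sub_gaussianReal (μ : ℝ) (v : ℝ≥0) :
    ∫ x, (x - μ) ^ 2 ∂gaussianReal μ v = v := by
  rw [← variance_fun_id_gaussianReal, variance_eq_integral measurable_id'.aemeasurable,
    integral_id_gaussianReal]

lemma integrable_hyvScore_gaussianPDFReal (μ : ℝ) {w : ℝ≥0} (hw : 0 < w) (v : ℝ≥0) :
    Integrable (hyvScore (gaussianPDFReal μ w)) (gaussianReal μ v) := by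
  simp_rw [funext (hyvScore_gaussianPDFReal μ hw)]
  exact (integrable_const _).add ((integrable_sq_sub_gaussianReal μ v).div_const _)

lemma integral_hyvScore_gaussianPDFReal (μ : ℝ) {w : ℝ≥0} (hw : 0 < w) (v : ℝ≥0) :
    ∫ x, hyvScore (gaussianPDFReal μ w) x ∂gaussianReal μ v = -2 / w + v / w ^ 2 := by
  simp_rw [hyvScore_gaussianPDFReal μ hw]
  rw [integral_add (integrable_const _) ((integrable_sq_sub_gaussianReal μ v).div_const _),
    integral_const, integral_div, integral_sq_sub_gaussianReal]
  simp

lemma measurable_hyvScore_gaussianPDFReal (μ : ℝ) {w : ℝ≥0} (hw : 0 < w) :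
    Measurable (hyvScore (gaussianPDFReal μ w)) := by
  rw [funext (hyvScore_gaussianPDFReal μ hw)]
  fun_prop

section StrongLaw

variable {Ω : Type*} [MeasurableSpace Ω] {P : Measure Ω}

lemma tendsto_atTop_of_tendsto_inv_mul_pos {s : ℕ → ℝ} {l : ℝ} (hl : 0 < l)
    (hs : Tendsto (fun n : ℕ => (n : ℝ)⁻¹ * s n) atTop (nhds l)) : Tendsto s atTop atTop := by
  refine (tendsto_natCast_atTop_atTop.atTop_mul_pos hl hs).congr' ?_
  filter_upwards [eventually_ne_atTop 0] with n hn
  field_simp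

lemma ae_tendsto_sum_atTop_of_integral_pos {Y : ℕ → Ω → ℝ} (hint : Integrable (Y 0) P)
    (hindep : Pairwise (Function.onFun (IndepFun · · P) Y))
    (hident : ∀ i, IdentDistrib (Y i) (Y 0) P P) (hpos : 0 < P[Y 0]) :
    ∀ᵐ ω ∂P, Tendsto (fun n => ∑ i ∈ Finset.range n, Y i ω) atTop atTop := by
  filter_upwards [strong_law_ae Y hint hindep hident] with ω hω
  exact tendsto_atTop_of_tendsto_inv_mul_pos hpos hω

lemma ae_tendsto_sum_comp_atTop_of_integral_pos {E : Type*} [MeasurableSpace E] {ν : Measure E}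
    {X : ℕ → Ω → E} (hindep : iIndepFun X P) (hlaw : ∀ i, HasLaw (X i) ν P) {g : E → ℝ}
    (hg : Measurable g) (hint : Integrable g ν) (hpos : 0 < ∫ x, g x ∂ν) :
    ∀ᵐ ω ∂P, Tendsto (fun n => ∑ i ∈ Finset.range n, g (X i ω)) atTop atTop := by
  refine ae_tendsto_sum_atTop_of_integral_pos (Y := fun i => g ∘ X i) ?_
    (fun i j hij => (hindep.comp (fun _ => g) (fun _ => hg)).indepFun hij)
    (fun i => ((hlaw i).identDistrib (hlaw 0)).comp hg) ?_
  · rw [← integrable_map_measure hg.aestronglyMeasurable (hlaw 0).aemeasurable, (hlaw 0).map_eq]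
    exact hint
  · rwa [(hlaw 0).integral_comp hg.aestronglyMeasurable]

end StrongLaw

lemma integral_hyvScore_sub_gaussianPDFReal (μ : ℝ) {v w : ℝ≥0} (hv : 0 < v) (hw : 0 < w) :
    ∫ x, hyvScore (gaussianPDFReal μ w) x - hyvScore (gaussianPDFReal μ v) x ∂gaussianReal μ v
      = (v - w) ^ 2 / (v * w ^ 2) := by
  rw [integral_sub (integrable_hyvScore_gaussianPDFReal μ hw v)
    (integrable_hyvScore_gaussianPDFReal μ hv v), integral_hyvScore_gaussianPDFReal μ hw,
    integral_hyvScore_gaussianPDFReal μ hv]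
  have hv' : (v : ℝ) ≠ 0 := by positivity
  have hw' : (w : ℝ) ≠ 0 := by positivity
  field_simp
  ring

theorem stmt_9_general {Ω : Type*} [MeasurableSpace Ω] (μmeas : Measure Ω)
    (μ : ℝ) (vP vQ : ℝ≥0) (hP : 0 < vP) (hQ : 0 < vQ) (hne : vP ≠ vQ)
    (p q : ℝ → ℝ) (hp : p = gaussianPDFReal μ vP) (hq : q = gaussianPDFReal μ vQ)
    (X : ℕ → Ω → ℝ)
    (hindep : iIndepFun X μmeas)
    (hident : ∀ i, Measure.map (X i) μmeas = gaussianReal μ vP) :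
    ∀ᵐ ω ∂μmeas, Tendsto
      (fun n => ∑ i ∈ Finset.range n, (hyvScore q (X i ω) - hyvScore p (X i ω)))
      atTop atTop := by
  subst hp hq
  -- `Measure.map` of a non-a.e.-measurable function is `0`, so the law pins down measurability.
  have hlaw : ∀ i, HasLaw (X i) (gaussianReal μ vP) μmeas := fun i =>
    ⟨.of_map_ne_zero (hident i ▸ IsProbabilityMeasure.ne_zero _), hident i⟩
  refine ae_tendsto_sum_comp_atTop_of_integral_pos hindep hlaw
    (g := fun x => hyvScore (gaussianPDFReal μ vQ) x - hyvScore (gaussianPDFReal μ vP) x)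
    ((measurable_hyvScore_gaussianPDFReal μ hQ).sub (measurable_hyvScore_gaussianPDFReal μ hP))
    ((integrable_hyvScore_gaussianPDFReal μ hQ vP).sub
      (integrable_hyvScore_gaussianPDFReal μ hP vP)) ?_
  have hne' : (vP : ℝ) - vQ ≠ 0 := sub_ne_zero.mpr (NNReal.coe_injective.ne hne)
  rw [integral_hyvScore_sub_gaussianPDFReal μ hP hQ]
  positivity

theorem stmt_9 {Ω : Type*} [MeasurableSpace Ω] (μmeas : Measure Ω) [IsProbabilityMeasure μmeas]
    (μ : ℝ) (vP vQ : ℝ≥0) (hP : 0 < vP) (hQ : 0 < vQ) (hne : vP ≠ vQ)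
    (p q : ℝ → ℝ) (hp : p = gaussianPDFReal μ vP) (hq : q = gaussianPDFReal μ vQ)
    (X : ℕ → Ω → ℝ) (hmeas : ∀ i, Measurable (X i))
    (hindep : iIndepFun X μmeas)
    (hident : ∀ i, Measure.map (X i) μmeas = gaussianReal μ vP) :
    ∀ᵐ ω ∂μmeas, Tendsto
      (fun n => ∑ i ∈ Finset.range n, (hyvScore q (X i ω) - hyvScore p (X i ω)))
      atTop atTop :=
  stmt_9_general μmeas μ vP vQ hP hQ hne p q hp hq X hindep hident
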